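/- For every n ≥ 2 and every A ⊆ [n], one has f_n(A) ≥ 2·f_{n−1}(A ∩ [n−1]); consequently, for every n ≥ 1 and every A ⊆ [n], f_n(A) ≥ 2^{n−1}. -/

import Mathlib

/-- `σ` is in the set-alternating domain of `A` on alternatives `{1,…,n}`
(alternative `m` is represented by the index `m-1 : Fin n`; `σ x` is the rank
of alternative `x`, smaller rank = better). For every triple `i < j < k`:
if the middle alternative `j` (whose 1-based name is `j+1`) is in `A`, then
`i` is never ranked below both `j` and `k` (1N3); otherwise `k` is never
ranked above both `i` and `j` (3N1). -/
def inSetAltDomain (n : ℕ) (A : Finset ℕ) (σ : Equiv.Perm (Fin n)) : Prop :=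
  ∀ i j k : Fin n, i < j → j < k →
    (((j : ℕ) + 1 ∈ A) → ¬ (σ j < σ i ∧ σ k < σ i)) ∧
    (((j : ℕ) + 1 ∉ A) → ¬ (σ k < σ i ∧ σ k < σ j))

/-- The set-alternating domain `D_n(A)`. -/
def setAltDomain (n : ℕ) (A : Finset ℕ) : Set (Equiv.Perm (Fin n)) :=
  {σ | inSetAltDomain n A σ}

/-- `f_n(A)`, the cardinality of `D_n(A)`. -/
noncomputable def fsize (n : ℕ) (A : Finset ℕ) : ℕ := (setAltDomain n A).ncard


/-!
Deleting alternative `n` maps `D_n(A)` to `D_{n-1}(A ∩ [n-1])`, because every defining condition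
concerns a single triple and the membership in `A` of its middle alternative only. Conversely each
`P ∈ D_{n-1}(A ∩ [n-1])` has two distinct extensions in `D_n(A)`: put `n` at the bottom; and,
if `n-1 ∈ A`, let `n` take the place of `n-1` and put `n-1` at the bottom, while if `n-1 ∉ A`,
put `n` directly above the bottom alternative `b` of `P`. In the last case the only triple that
could fail is `(b, j, n)` with `j ∈ A`, and it is ruled out by the condition on `(b, j, n-1)` in `P`.
Each extension inserts one alternative (`n` or `n-1`) at a prescribed rank, the other `n-1`
alternatives being ranked, in increasing order, as `P` ranks `1, …, n-1`. Iterating from `f_1 = 1` gives `f_n ≥ 2^{n-1}`.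
-/

open Equiv Function Fin

def SetAltTriple (n : ℕ) (A : Finset ℕ) (σ : Perm (Fin n)) (i j k : Fin n) : Prop :=
  (((j : ℕ) + 1 ∈ A) → ¬ (σ j < σ i ∧ σ k < σ i)) ∧
  (((j : ℕ) + 1 ∉ A) → ¬ (σ k < σ i ∧ σ k < σ j))

theorem one_mem_setAltDomain (n : ℕ) (A : Finset ℕ) : (1 : Perm (Fin n)) ∈ setAltDomain n A :=
  fun _ _ _ hij hjk => ⟨fun _ h => lt_asymm hij h.1, fun _ h => lt_asymm (hij.trans hjk) h.1⟩

theorem one_le_fsize (n : ℕ) (A : Finset ℕ) : 1 ≤ fsize n A :=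
  (Set.ncard_pos (Set.toFinite _)).mpr ⟨1, one_mem_setAltDomain n A⟩

theorem setAltTriple_of_apply_eq_last {n : ℕ} {A : Finset ℕ} {τ : Perm (Fin (n + 1))}
    {i j k : Fin (n + 1)} (hk : τ k = last n) : SetAltTriple (n + 1) A τ i j k :=
  ⟨fun _ h => not_lt_of_ge (le_last _) (hk ▸ h.2),
    fun _ h => not_lt_of_ge (le_last _) (hk ▸ h.1)⟩

theorem setAltTriple_of_mem_of_apply_eq_last {n : ℕ} {A : Finset ℕ} {τ : Perm (Fin (n + 1))}
    {i j k : Fin (n + 1)} (hjA : (j : ℕ) + 1 ∈ A) (hj : τ j = last n) :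
    SetAltTriple (n + 1) A τ i j k :=
  ⟨fun _ h => not_lt_of_ge (le_last _) (hj ▸ h.1), fun hjA' => absurd hjA hjA'⟩

section insertPerm

variable {n : ℕ}

def insertPerm (p r : Fin (n + 1)) (σ : Perm (Fin n)) : Perm (Fin (n + 1)) :=
  (finSuccEquiv' p).trans ((optionCongr σ).trans (finSuccEquiv' r).symm)

@[simp] theorem insertPerm_apply_self (p r : Fin (n + 1)) (σ : Perm (Fin n)) :
    insertPerm p r σ p = r := by
  simp [insertPerm, finSuccEquiv'_at]

@[simp] theorem insertPerm_apply_succAbove (p r : Fin (n + 1)) (σ : Perm (Fin n)) (x : Fin n) :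
    insertPerm p r σ (p.succAbove x) = r.succAbove (σ x) := by
  simp [insertPerm, finSuccEquiv'_succAbove]

theorem insertPerm_symm_apply_self (p r : Fin (n + 1)) (σ : Perm (Fin n)) :
    (insertPerm p r σ).symm r = p :=
  (insertPerm p r σ).symm_apply_eq.mpr (insertPerm_apply_self p r σ).symm

theorem insertPerm_injective (p r : Fin (n + 1)) : Injective (insertPerm p r) := fun σ σ' h =>
  Equiv.ext fun x => succAbove_right_injective (p := r) <| by
    simpa using congrArg (fun τ : Perm (Fin (n + 1)) => τ (p.succAbove x)) h

theorem insertPerm_succAbove_lt_iff (p r : Fin (n + 1)) (σ : Perm (Fin n)) (x y : Fin n) :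
    insertPerm p r σ (p.succAbove x) < insertPerm p r σ (p.succAbove y) ↔ σ x < σ y := by
  simp [succAbove_lt_succAbove_iff]

end insertPerm

section extension

variable {n : ℕ} {A B : Finset ℕ}

/-- `hp` ensures that deleting `p` relabels no alternative that can be the middle of a triple. -/
theorem inSetAltDomain_of_succAbove {p : Fin (n + 2)} {τ : Perm (Fin (n + 2))}
    {σ : Perm (Fin (n + 1))} (hp : (last n).castSucc ≤ p)
    (hAB : ∀ j < n, j + 1 ∈ B ↔ j + 1 ∈ A)
    (hord : ∀ x y, τ (p.succAbove x) < τ (p.succAbove y) ↔ σ x < σ y)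
    (hσ : inSetAltDomain (n + 1) B σ)
    (hright : ∀ i j, i < j → j < p → SetAltTriple (n + 2) A τ i j p)
    (hmiddle : ∀ i k, i < p → p < k → SetAltTriple (n + 2) A τ i p k) :
    inSetAltDomain (n + 2) A τ := by
  intro i j k hij hjk
  rcases eq_or_ne k p with rfl | hk
  · exact hright i j hij hjk
  rcases eq_or_ne j p with rfl | hj
  · exact hmiddle i k hij hjk
  have hi : i ≠ p := by
    rintro rfl
    have := k.isLt
    simp only [Fin.le_def, val_castSucc, val_last, Fin.lt_def] at hp hij hjk
    omega
  obtain ⟨i', rfl⟩ := exists_succAbove_eq hi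
  obtain ⟨j', rfl⟩ := exists_succAbove_eq hj
  obtain ⟨k', rfl⟩ := exists_succAbove_eq hk
  rw [succAbove_lt_succAbove_iff] at hij hjk
  have hj' : (j' : ℕ) < n := by have := k'.isLt; rw [Fin.lt_def] at hjk; omega
  have hlabel : (p.succAbove j' : ℕ) = j' := by
    rw [succAbove_of_castSucc_lt _ _ (lt_of_lt_of_le (castSucc_lt_castSucc_iff.mpr
      (lt_of_lt_of_le hjk (le_last k'))) hp), val_castSucc]
  simp only [hord, hlabel, ← hAB _ hj']
  exact hσ i' j' k' hij hjk

theorem insertPerm_last_mem_setAltDomain {p : Fin (n + 2)} {σ : Perm (Fin (n + 1))}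
    (hp : (last n).castSucc ≤ p) (hAB : ∀ j < n, j + 1 ∈ B ↔ j + 1 ∈ A)
    (hpA : p ≠ last (n + 1) → (p : ℕ) + 1 ∈ A) (hσ : σ ∈ setAltDomain (n + 1) B) :
    insertPerm p (last (n + 1)) σ ∈ setAltDomain (n + 2) A :=
  inSetAltDomain_of_succAbove hp hAB (insertPerm_succAbove_lt_iff _ _ σ) hσ
    (fun _ _ _ _ => setAltTriple_of_apply_eq_last (insertPerm_apply_self _ _ σ))
    (fun _ _ _ hpk => setAltTriple_of_mem_of_apply_eq_last (hpA (ne_last_of_lt hpk))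
      (insertPerm_apply_self _ _ σ))

theorem insertPerm_last_castSucc_last_mem_setAltDomain {σ : Perm (Fin (n + 1))}
    (hAB : ∀ j < n, j + 1 ∈ B ↔ j + 1 ∈ A) (hA : n + 1 ∉ A) (hσ : σ ∈ setAltDomain (n + 1) B) :
    insertPerm (last (n + 1)) (last n).castSucc σ ∈ setAltDomain (n + 2) A := by
  set τ := insertPerm (last (n + 1)) (last n).castSucc σ
  have new_lt_iff : ∀ x, τ (last (n + 1)) < τ x.castSucc ↔ σ x = last n := by
    intro x
    rw [← succAbove_last_apply, insertPerm_apply_self, insertPerm_apply_succAbove,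
      lt_succAbove_iff_le_castSucc, castSucc_le_castSucc_iff, last_le_iff]
  refine inSetAltDomain_of_succAbove (le_last _) hAB (insertPerm_succAbove_lt_iff _ _ σ) hσ
    (fun i j hij hj => ?_) (fun _ _ _ h => absurd h (not_lt_of_ge (le_last _)))
  obtain ⟨j', rfl⟩ := exists_castSucc_eq.mpr (ne_last_of_lt hj)
  obtain ⟨i', rfl⟩ := exists_castSucc_eq.mpr (ne_last_of_lt (hij.trans hj))
  rw [castSucc_lt_castSucc_iff] at hij
  refine ⟨fun hjA h => ?_, fun _ h => ?_⟩
  · have hi' : σ i' = last n := (new_lt_iff i').mp h.2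
    have hj' : j' < last n := lt_last_iff_ne_last.mpr fun hlast => hA (by simpa [hlast] using hjA)
    have hlt : ∀ x, x ≠ i' → σ x < σ i' := fun x hx =>
      hi' ▸ lt_last_iff_ne_last.mpr fun hlast => hx (σ.injective (hlast.trans hi'.symm))
    exact (hσ i' j' (last n) hij hj').1 ((hAB _ (by simpa [Fin.lt_def] using hj')).mpr
      (by simpa using hjA))
      ⟨hlt j' hij.ne', hlt (last n) (hij.trans hj').ne'⟩
  · exact hij.ne (σ.injective (((new_lt_iff i').mp h.1).trans ((new_lt_iff j').mp h.2).symm))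

end extension

theorem two_mul_ncard_le_ncard {α β : Type*} [Finite β] {S : Set α} {T : Set β} {f g : α → β}
    (hf : Injective f) (hg : Injective g) (hfg : ∀ x y, f x ≠ g y)
    (hfT : Set.MapsTo f S T) (hgT : Set.MapsTo g S T) : 2 * S.ncard ≤ T.ncard := by
  have hdisj : Disjoint (f '' S) (g '' S) := Set.disjoint_left.mpr <| by
    rintro _ ⟨x, _, rfl⟩ ⟨y, _, hy⟩
    exact hfg x y hy.symm
  calc 2 * S.ncard = (f '' S).ncard + (g '' S).ncard := by
        rw [Set.ncard_image_of_injective _ hf, Set.ncard_image_of_injective _ hg]; ring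
    _ = (f '' S ∪ g '' S).ncard := (Set.ncard_union_eq hdisj).symm
    _ ≤ T.ncard := Set.ncard_le_ncard (Set.union_subset hfT.image_subset hgT.image_subset)

theorem two_mul_fsize_le_fsize_succ {n : ℕ} {A B : Finset ℕ}
    (hAB : ∀ j < n, j + 1 ∈ B ↔ j + 1 ∈ A) : 2 * fsize (n + 1) B ≤ fsize (n + 2) A := by
  have bottom := fun σ => insertPerm_last_mem_setAltDomain (σ := σ) (le_last _) hAB (absurd rfl)
  have hne : (last n).castSucc ≠ last (n + 1) := (castSucc_lt_last _).ne
  by_cases hA : n + 1 ∈ A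
  · refine two_mul_ncard_le_ncard (insertPerm_injective _ _) (insertPerm_injective _ _)
      (fun σ σ' h => hne ?_) (fun σ => bottom σ) (fun σ => insertPerm_last_mem_setAltDomain
        le_rfl hAB (fun _ => by simpa using hA))
    simpa only [insertPerm_symm_apply_self] using
      congrArg (fun τ : Perm (Fin (n + 2)) => τ.symm (last (n + 1))) h.symm
  · refine two_mul_ncard_le_ncard (insertPerm_injective _ _) (insertPerm_injective _ _)
      (fun σ σ' h => hne ?_) (fun σ => bottom σ)
      (fun σ => insertPerm_last_castSucc_last_mem_setAltDomain hAB hA)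
    simpa only [insertPerm_apply_self] using
      congrArg (fun τ : Perm (Fin (n + 2)) => τ (last (n + 1))) h.symm

theorem two_pow_le_fsize (n : ℕ) (A : Finset ℕ) : 2 ^ n ≤ fsize (n + 1) A := by
  induction n with
  | zero => exact one_le_fsize 1 A
  | succ n ih =>
    calc 2 ^ (n + 1) = 2 * 2 ^ n := pow_succ' 2 n
      _ ≤ 2 * fsize (n + 1) A := by gcongr
      _ ≤ fsize (n + 2) A := two_mul_fsize_le_fsize_succ fun _ _ => Iff.rfl

/-- `f_n(A) ≥ 2·f_{n-1}(A ∩ [n-1])` for `n ≥ 2`, and consequently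
`f_n(A) ≥ 2^{n-1}` for `n ≥ 1`. -/
theorem stmt7 :
    (∀ n : ℕ, 2 ≤ n → ∀ A : Finset ℕ, A ⊆ Finset.Icc 1 n →
      2 * fsize (n-1) (A ∩ Finset.Icc 1 (n-1)) ≤ fsize n A) ∧
    (∀ n : ℕ, 1 ≤ n → ∀ A : Finset ℕ, A ⊆ Finset.Icc 1 n →
      2^(n-1) ≤ fsize n A) := by
  refine ⟨fun n hn A _ => ?_, fun n hn A _ => ?_⟩
  · obtain ⟨n, rfl⟩ := Nat.exists_eq_add_of_le' hn
    show 2 * fsize (n + 1) (A ∩ Finset.Icc 1 (n + 1)) ≤ fsize (n + 2) A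
    exact two_mul_fsize_le_fsize_succ fun j hj => by
      simp only [Finset.mem_inter, Finset.mem_Icc, and_iff_left_iff_imp]; omega
  · obtain ⟨n, rfl⟩ := Nat.exists_eq_add_of_le' hn
    exact two_pow_le_fsize n A
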